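/- In any simple graph G, the number of subgraphs isomorphic to the disjoint union of a triangle and an edge equals (1/3) ∑_{st∈E} ∑_{u∈Γ(s)∩Γ(t)} (m - k_s - k_t - k_u + 3). -/

import Mathlib

/-!
A copy of `C₃ ⊕ P₂` in `G` is the same thing as a triangle `T` together with an edge avoiding `T`.
By inclusion–exclusion, a triangle `{s, t, u}` is avoided by `m - k_s - k_t - k_u + 3` edges: the
three edges of the triangle are subtracted twice. Summing over adjacent ordered pairs `(s, t)` and
common neighbours `u` counts each triangle once for each of its `6` ordered pairs of distinct
vertices; the edge sum halves this, which leaves the factor `1 / 3`.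
-/

open Finset BigOperators SimpleGraph

namespace CrossVar

variable {V : Type} [Fintype V] [DecidableEq V]

/-- Adjacency indicator `a_{xy}`. -/
def a (G : SimpleGraph V) [DecidableRel G.Adj] (x y : V) : ℚ := if G.Adj x y then 1 else 0

/-- Degree `k_v` as a rational number. -/
def deg (G : SimpleGraph V) [DecidableRel G.Adj] (v : V) : ℚ := (G.degree v : ℚ)

/-- Sum over the set `Q` of unordered pairs `{st, uv}` of vertex-disjoint (independent) edges of
`G` of a function `f s t u v` (intended to be invariant under `s ↔ t`, `u ↔ v` and
`(s,t) ↔ (u,v)`).  Each unordered pair of independent edges corresponds to exactly `8` ordered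
tuples `(s,t,u,v)`, whence the division by `8`. -/
def Qsum (G : SimpleGraph V) [DecidableRel G.Adj] (f : V → V → V → V → ℚ) : ℚ :=
  (∑ s, ∑ t, ∑ u, ∑ v,
    if G.Adj s t ∧ G.Adj u v ∧ s ≠ u ∧ s ≠ v ∧ t ≠ u ∧ t ≠ v then f s t u v else 0) / 8

/-- Sum over the unordered edges `{s,t} ∈ E` of `f s t` (intended for symmetric `f`);
each unordered edge corresponds to two ordered adjacent pairs, whence the division by `2`. -/
def edgeSum (G : SimpleGraph V) [DecidableRel G.Adj] (f : V → V → ℚ) : ℚ :=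
  (∑ s, ∑ t, if G.Adj s t then f s t else 0) / 2

/-- The number of subgraphs of `G` isomorphic to `F` (each unlabeled copy counted once). -/
noncomputable def copyCount {α : Type} (G : SimpleGraph V) (F : SimpleGraph α) : ℕ :=
  Nat.card {H : G.Subgraph // Nonempty (H.coe ≃g F)}

/-- `ξ(v)`: the sum of the degrees of the neighbours of `v`. -/
def xi (G : SimpleGraph V) [DecidableRel G.Adj] (v : V) : ℚ :=
  ∑ u ∈ G.neighborFinset v, deg G u

/-- The paw graph: a triangle `{0,1,2}` with a pendant edge `{2,3}`. -/
def pawGraph : SimpleGraph (Fin 4) :=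
  SimpleGraph.fromRel (fun x y => (x, y) ∈ [((0 : Fin 4), (1 : Fin 4)), (0, 2), (1, 2), (2, 3)])

/-- `C₃ ⊕ P₂`: the disjoint union of a triangle `{0,1,2}` and an edge `{3,4}`. -/
def triEdgeGraph : SimpleGraph (Fin 5) :=
  SimpleGraph.fromRel (fun x y => (x, y) ∈ [((0 : Fin 5), (1 : Fin 5)), (0, 2), (1, 2), (3, 4)])

section EdgesAvoiding

variable (G : SimpleGraph V) [DecidableRel G.Adj]

lemma indicator_forall_notMem_eq {R : Type*} [CommRing R] {x y : V} (hxy : x ≠ y)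
    (T : Finset V) :
    ((if ∀ v ∈ s(x, y), v ∉ T then 1 else 0) : R) =
      1 - ∑ v ∈ T, (if v ∈ s(x, y) then 1 else 0) + if ∀ v ∈ s(x, y), v ∈ T then 1 else 0 := by
  have hsplit : ∀ v, ((if v ∈ s(x, y) then 1 else 0) : R) =
      (if x = v then 1 else 0) + if y = v then 1 else 0 := fun v => by
    rcases eq_or_ne x v with rfl | hxv
    · simp [hxy, hxy.symm]
    · simp [hxv, hxv.symm, eq_comm]
  rw [Finset.sum_congr rfl fun v _ => hsplit v, Finset.sum_add_distrib, Finset.sum_ite_eq,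
    Finset.sum_ite_eq]
  simp only [Sym2.mem_iff, forall_eq_or_imp, forall_eq]
  by_cases hx : x ∈ T <;> by_cases hy : y ∈ T <;> simp [hx, hy]

lemma card_edges_avoiding {R : Type*} [CommRing R] (T : Finset V) :
    (#{e ∈ G.edgeFinset | ∀ v ∈ e, v ∉ T} : R) =
      #G.edgeFinset - ∑ v ∈ T, (G.degree v : R) + #{e ∈ G.edgeFinset | ∀ v ∈ e, v ∈ T} := by
  have hdeg : ∀ v, (G.degree v : R) = ∑ e ∈ G.edgeFinset, if v ∈ e then 1 else 0 := fun v => by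
    rw [← card_incidenceFinset_eq_degree, incidenceFinset_eq_filter, Finset.card_filter]
    push_cast
    rfl
  simp only [Finset.card_filter, hdeg]
  push_cast
  rw [Finset.sum_comm, Finset.cast_card, ← Finset.sum_sub_distrib, ← Finset.sum_add_distrib]
  refine Finset.sum_congr rfl fun e he => ?_
  induction e using Sym2.ind with
  | _ x y => exact indicator_forall_notMem_eq (G.mem_edgeFinset.mp he).ne T

omit [DecidableRel G.Adj] in
lemma card_edges_within_of_isClique [Fintype G.edgeSet] {T : Finset V} (hT : G.IsClique (T : Set V)) :
    #{e ∈ G.edgeFinset | ∀ v ∈ e, v ∈ T} = (#T).choose 2 := by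
  rw [← Sym2.card_image_offDiag]
  congr 1
  ext e
  induction e using Sym2.ind with
  | _ x y =>
    simp only [Finset.mem_filter, mem_edgeFinset, mem_edgeSet, Sym2.mem_iff, forall_eq_or_imp,
      forall_eq, Finset.mem_image, Finset.mem_offDiag, Prod.exists, Function.uncurry_apply_pair]
    constructor
    · rintro ⟨hxy, hx, hy⟩
      exact ⟨x, y, ⟨hx, hy, hxy.ne⟩, rfl⟩
    · rintro ⟨a, b, ⟨ha, hb, hab⟩, he⟩
      rcases Sym2.eq_iff.mp he with ⟨rfl, rfl⟩ | ⟨rfl, rfl⟩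
      · exact ⟨hT ha hb hab, ha, hb⟩
      · exact ⟨hT hb ha (Ne.symm hab), hb, ha⟩

lemma card_edges_avoiding_triangle {s t u : V} (hst : G.Adj s t) (hsu : G.Adj s u)
    (htu : G.Adj t u) :
    (#{e ∈ G.edgeFinset | ∀ v ∈ e, v ∉ ({s, t, u} : Finset V)} : ℚ) =
      #G.edgeFinset - deg G s - deg G t - deg G u + 3 := by
  have hT : G.IsNClique 3 {s, t, u} := is3Clique_triple_iff.mpr ⟨hst, hsu, htu⟩
  rw [card_edges_avoiding, card_edges_within_of_isClique G hT.1, hT.card_eq,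
    Finset.sum_insert (by simp [hst.ne, hsu.ne]), Finset.sum_pair htu.ne]
  norm_num [deg]
  ring

end EdgesAvoiding

lemma sum_sum_sum_ite_mem_offDiag {M : Type*} [AddCommMonoid M] (𝒜 : Finset (Finset V))
    (w : Finset V → M) :
    ∑ s, ∑ t, ∑ T ∈ 𝒜, (if (s, t) ∈ T.offDiag then w T else 0) = ∑ T ∈ 𝒜, #T.offDiag • w T := by
  simp only [← Fintype.sum_prod_type', Finset.sum_comm (s := (Finset.univ : Finset (V × V))),
    Finset.sum_ite_mem, Finset.univ_inter, Finset.sum_const]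
omit [Fintype V] in
lemma eq_of_insert_insert_singleton_eq {s t u u' : V} (hus : u ≠ s) (hut : u ≠ t)
    (h : ({s, t, u} : Finset V) = {s, t, u'}) : u = u' := by
  have : u ∈ ({s, t, u'} : Finset V) := h ▸ by simp
  simpa [hus, hut] using this

section TrianglesOnEdge

variable (G : SimpleGraph V) [DecidableRel G.Adj] {s t : V}

lemma filter_cliqueFinset_three_mem_offDiag (hst : G.Adj s t) :
    {T ∈ G.cliqueFinset 3 | (s, t) ∈ T.offDiag} =
      (G.neighborFinset s ∩ G.neighborFinset t).image fun u => {s, t, u} := by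
  ext T
  simp only [Finset.mem_filter, mem_cliqueFinset_iff, Finset.mem_offDiag, Finset.mem_image,
    Finset.mem_inter, mem_neighborFinset]
  constructor
  · rintro ⟨hT, hs, ht, -⟩
    obtain ⟨u, hu⟩ : ∃ u, (T.erase s).erase t = {u} := by
      rw [← Finset.card_eq_one, Finset.card_erase_of_mem (Finset.mem_erase.mpr ⟨hst.ne', ht⟩),
        Finset.card_erase_of_mem hs, hT.card_eq]
    have hTeq : T = {s, t, u} := by
      rw [← hu, Finset.insert_erase (Finset.mem_erase.mpr ⟨hst.ne', ht⟩), Finset.insert_erase hs]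
    rw [hTeq, is3Clique_triple_iff] at hT
    exact ⟨u, ⟨hT.2.1, hT.2.2⟩, hTeq.symm⟩
  · rintro ⟨u, ⟨hsu, htu⟩, rfl⟩
    exact ⟨is3Clique_triple_iff.mpr ⟨hst, hsu, htu⟩, by simp, by simp, hst.ne⟩

lemma sum_cliqueFinset_three_ite_mem_offDiag {M : Type*} [AddCommMonoid M] (w : Finset V → M)
    (s t : V) :
    ∑ T ∈ G.cliqueFinset 3, (if (s, t) ∈ T.offDiag then w T else 0) =
      if G.Adj s t then ∑ u ∈ G.neighborFinset s ∩ G.neighborFinset t, w {s, t, u} else 0 := by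
  rw [← Finset.sum_filter]
  split_ifs with hst
  · rw [filter_cliqueFinset_three_mem_offDiag G hst]
    refine Finset.sum_image fun u hu u' _ => eq_of_insert_insert_singleton_eq ?_ ?_
    all_goals simp only [Finset.coe_inter, Set.mem_inter_iff, Finset.mem_coe,
      mem_neighborFinset] at hu
    exacts [hu.1.ne', hu.2.ne']
  · refine Finset.sum_eq_zero fun T hT => absurd ?_ hst
    simp only [Finset.mem_filter, mem_cliqueFinset_iff, Finset.mem_offDiag] at hT
    exact hT.1.1 hT.2.1 hT.2.2.1 hT.2.2.2

end TrianglesOnEdge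

instance : DecidableRel triEdgeGraph.Adj := fun x y =>
  decidable_of_iff _ (SimpleGraph.fromRel_adj _ x y).symm

omit [Fintype V] [DecidableEq V] in
def triangleEdgeSubgraph (G : SimpleGraph V) (T : Finset V) (e : Sym2 V) : G.Subgraph where
  verts := ↑T ∪ {v | v ∈ e}
  Adj x y := G.Adj x y ∧ (x ∈ T ∧ y ∈ T ∨ s(x, y) = e)
  adj_sub h := h.1
  edge_vert := by
    rintro x y ⟨-, ⟨hx, -⟩ | rfl⟩
    exacts [Or.inl hx, Or.inr (Sym2.mem_mk_left x y)]
  symm := ⟨by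
    rintro x y ⟨hxy, ⟨hx, hy⟩ | he⟩
    exacts [⟨hxy.symm, Or.inl ⟨hy, hx⟩⟩, ⟨hxy.symm, Or.inr (Sym2.eq_swap.trans he)⟩]⟩

section TriangleEdgeSubgraph

variable {G : SimpleGraph V}

omit [Fintype V] in
lemma Copy.toSubgraph_eq_triangleEdgeSubgraph (f : Copy triEdgeGraph G) :
    f.toSubgraph = triangleEdgeSubgraph G {f 0, f 1, f 2} s(f 3, f 4) := by
  ext x y
  · simp only [Subgraph.map_verts, Subgraph.verts_top, Set.image_univ, Set.mem_range,
      triangleEdgeSubgraph, Set.mem_union, Finset.mem_coe, Finset.mem_insert,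
      Finset.mem_singleton, Set.mem_ofPred_eq, Sym2.mem_iff]
    constructor
    · rintro ⟨i, rfl⟩
      fin_cases i <;> simp
    · rintro ((rfl | rfl | rfl) | rfl | rfl) <;> exact ⟨_, rfl⟩
  · simp only [Subgraph.map_adj, Subgraph.top_adj, Relation.Map, triangleEdgeSubgraph,
      Finset.mem_insert, Finset.mem_singleton]
    constructor
    · rintro ⟨i, j, hij, rfl, rfl⟩
      refine ⟨f.toHom.map_adj hij, ?_⟩
      fin_cases i <;> fin_cases j <;> first | exact absurd hij (by decide) | simp
    · rintro ⟨hxy, ⟨hx, hy⟩ | he⟩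
      · rcases hx with rfl | rfl | rfl <;> rcases hy with rfl | rfl | rfl <;>
          first | exact absurd rfl hxy.ne | exact ⟨_, _, by decide, rfl, rfl⟩
      · rcases Sym2.eq_iff.mp he with ⟨rfl, rfl⟩ | ⟨rfl, rfl⟩
        exacts [⟨3, 4, by decide, rfl, rfl⟩, ⟨4, 3, by decide, rfl, rfl⟩]

variable {T T' : Finset V} {e e' : Sym2 V}

omit [Fintype V] in
lemma exists_copy_toSubgraph_eq (hT : G.IsNClique 3 T) (he : e ∈ G.edgeSet)
    (hdisj : ∀ v ∈ e, v ∉ T) :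
    ∃ f : Copy triEdgeGraph G, f.toSubgraph = triangleEdgeSubgraph G T e := by
  obtain ⟨a, b, c, hab, hac, hbc, rfl⟩ := is3Clique_iff.mp hT
  induction e using Sym2.ind with
  | _ d d' =>
  have hdd' : G.Adj d d' := he
  simp only [Sym2.mem_iff, forall_eq_or_imp, forall_eq, Finset.mem_insert,
    Finset.mem_singleton, not_or] at hdisj
  obtain ⟨⟨hda, hdb, hdc⟩, hd'a, hd'b, hd'c⟩ := hdisj
  let g : Fin 5 → V := ![a, b, c, d, d']
  have hg : ∀ i j, triEdgeGraph.Adj i j → G.Adj (g i) (g j) := by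
    intro i j hij
    fin_cases i <;> fin_cases j <;> first | exact absurd hij (by decide) | simp_all [g, G.adj_comm]
  have hginj : Function.Injective g := by
    intro i j hij
    fin_cases i <;> fin_cases j <;> simp_all [g, eq_comm, hab.ne, hac.ne, hbc.ne, hdd'.ne]
  exact ⟨⟨⟨g, hg _ _⟩, hginj⟩, Copy.toSubgraph_eq_triangleEdgeSubgraph _⟩

omit [Fintype V] in
lemma nonempty_iso_triEdgeGraph_iff (H : G.Subgraph) :
    Nonempty (H.coe ≃g triEdgeGraph) ↔
      ∃ T e, G.IsNClique 3 T ∧ e ∈ G.edgeSet ∧ (∀ v ∈ e, v ∉ T) ∧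
        triangleEdgeSubgraph G T e = H := by
  constructor
  · rintro ⟨φ⟩
    obtain ⟨f, -, rfl⟩ : H ∈ Set.range Copy.toSubgraph := by
      rw [Copy.range_toSubgraph]
      exact ⟨φ.symm⟩
    have hadj : ∀ i j, triEdgeGraph.Adj i j → G.Adj (f i) (f j) := fun i j => f.toHom.map_adj
    have hne : ∀ i j, i ≠ j → f i ≠ f j := fun i j hij h => hij (f.injective h)
    refine ⟨{f 0, f 1, f 2}, s(f 3, f 4), ?_, hadj 3 4 (by decide), ?_,
      (Copy.toSubgraph_eq_triangleEdgeSubgraph f).symm⟩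
    · exact is3Clique_triple_iff.mpr ⟨hadj 0 1 (by decide), hadj 0 2 (by decide),
        hadj 1 2 (by decide)⟩
    · simp only [Sym2.mem_iff, forall_eq_or_imp, forall_eq, Finset.mem_insert,
        Finset.mem_singleton, not_or]
      exact ⟨⟨hne 3 0 (by decide), hne 3 1 (by decide), hne 3 2 (by decide)⟩,
        hne 4 0 (by decide), hne 4 1 (by decide), hne 4 2 (by decide)⟩
  · rintro ⟨T, e, hT, he, hdisj, rfl⟩
    obtain ⟨f, hf⟩ := exists_copy_toSubgraph_eq hT he hdisj
    exact ⟨hf ▸ f.isoToSubgraph.symm⟩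

omit [Fintype V] in
lemma mem_iff_exists_triangleEdgeSubgraph_adj (hT : G.IsNClique 3 T) (v : V) :
    v ∈ T ↔ ∃ x y, x ≠ y ∧ (triangleEdgeSubgraph G T e).Adj v x ∧
      (triangleEdgeSubgraph G T e).Adj v y := by
  constructor
  · intro hv
    obtain ⟨x, hx, y, hy, hxy⟩ := Finset.one_lt_card.mp (show 1 < #(T.erase v) by
      rw [Finset.card_erase_of_mem hv, hT.card_eq]; norm_num)
    rw [Finset.mem_erase] at hx hy
    exact ⟨x, y, hxy, ⟨hT.1 hv hx.2 hx.1.symm, Or.inl ⟨hv, hx.2⟩⟩,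
      ⟨hT.1 hv hy.2 hy.1.symm, Or.inl ⟨hv, hy.2⟩⟩⟩
  · rintro ⟨x, y, hxy, ⟨-, ⟨hv, -⟩ | hvx⟩, ⟨-, ⟨hv, -⟩ | hvy⟩⟩
    all_goals first | exact hv | exact absurd (Sym2.congr_right.mp (hvx.trans hvy.symm)) hxy

omit [Fintype V] in
lemma triangleEdgeSubgraph_injective (hT : G.IsNClique 3 T) (hT' : G.IsNClique 3 T')
    (he : e ∈ G.edgeSet) (hdisj : ∀ v ∈ e, v ∉ T)
    (h : triangleEdgeSubgraph G T e = triangleEdgeSubgraph G T' e') : T = T' ∧ e = e' := by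
  have hTT' : T = T' := by
    ext v
    rw [mem_iff_exists_triangleEdgeSubgraph_adj hT, mem_iff_exists_triangleEdgeSubgraph_adj hT', h]
  subst hTT'
  refine ⟨rfl, ?_⟩
  induction e using Sym2.ind with
  | _ d d' =>
  have hdd' : (triangleEdgeSubgraph G T e').Adj d d' := h ▸ ⟨he, Or.inr rfl⟩
  exact hdd'.2.resolve_left fun hd => hdisj d (Sym2.mem_mk_left d d') hd.1

end TriangleEdgeSubgraph

lemma copyCount_triEdgeGraph (G : SimpleGraph V) [DecidableRel G.Adj] :
    copyCount G triEdgeGraph = ∑ T ∈ G.cliqueFinset 3, #{e ∈ G.edgeFinset | ∀ v ∈ e, v ∉ T} := by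
  have hmem : ∀ p : (_ : Finset V) × Sym2 V,
      p ∈ (G.cliqueFinset 3).sigma (fun T => {e ∈ G.edgeFinset | ∀ v ∈ e, v ∉ T}) ↔
        G.IsNClique 3 p.1 ∧ p.2 ∈ G.edgeSet ∧ ∀ v ∈ p.2, v ∉ p.1 := by
    simp [Finset.mem_sigma]
  rw [← Finset.card_sigma, ← Nat.card_eq_finsetCard, copyCount]
  refine (Nat.card_eq_of_bijective (fun p => ⟨triangleEdgeSubgraph G p.1.1 p.1.2,
    (nonempty_iso_triEdgeGraph_iff _).mpr ⟨_, _, ((hmem p).mp p.2).1, ((hmem p).mp p.2).2.1,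
      ((hmem p).mp p.2).2.2, rfl⟩⟩) ⟨?_, ?_⟩).symm
  · rintro ⟨p, hp⟩ ⟨q, hq⟩ h
    rw [hmem] at hp hq
    obtain ⟨h1, h2⟩ := triangleEdgeSubgraph_injective hp.1 hq.1 hp.2.1 hp.2.2 (congrArg Subtype.val h)
    exact Subtype.ext (Sigma.ext h1 (heq_of_eq h2))
  · rintro ⟨H, hH⟩
    obtain ⟨T, e, hT, he, hdisj, rfl⟩ := (nonempty_iso_triEdgeGraph_iff H).mp hH
    exact ⟨⟨⟨T, e⟩, (hmem _).mpr ⟨hT, he, hdisj⟩⟩, rfl⟩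

theorem stmt13 (G : SimpleGraph V) [DecidableRel G.Adj] :
    (copyCount G triEdgeGraph : ℚ) =
      (1 / 3) * edgeSum G (fun s t =>
        ∑ u ∈ G.neighborFinset s ∩ G.neighborFinset t,
          ((G.edgeFinset.card : ℚ) - deg G s - deg G t - deg G u + 3)) := by
  set w : Finset V → ℚ := fun T => #{e ∈ G.edgeFinset | ∀ v ∈ e, v ∉ T}
  have hedge : ∀ s t,
      (if G.Adj s t then ∑ u ∈ G.neighborFinset s ∩ G.neighborFinset t,
        ((#G.edgeFinset : ℚ) - deg G s - deg G t - deg G u + 3) else 0) =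
      ∑ T ∈ G.cliqueFinset 3, if (s, t) ∈ T.offDiag then w T else 0 := by
    intro s t
    rw [sum_cliqueFinset_three_ite_mem_offDiag]
    split_ifs with hst
    · refine Finset.sum_congr rfl fun u hu => ?_
      rw [Finset.mem_inter, mem_neighborFinset, mem_neighborFinset] at hu
      exact (card_edges_avoiding_triangle G hst hu.1 hu.2).symm
    · rfl
  have hoffDiag : ∀ T ∈ G.cliqueFinset 3, #T.offDiag = 6 := fun T hT => by
    rw [Finset.offDiag_card, (mem_cliqueFinset_iff.mp hT).card_eq]
  rw [edgeSum, Finset.sum_congr rfl fun s _ => Finset.sum_congr rfl fun t _ => hedge s t,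
    sum_sum_sum_ite_mem_offDiag,
    Finset.sum_congr rfl fun T hT => show #T.offDiag • w T = 6 • w T by rw [hoffDiag T hT],
    copyCount_triEdgeGraph]
  simp only [w, nsmul_eq_mul, ← Finset.mul_sum]
  push_cast
  ring

end CrossVar
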